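/- arXiv:1707.07918 — 2 statements merged into one kernel-verified Lean document; each statement's English description precedes it below -/
import Mathlib

section
/- Let $G$ be a group and $\|\cdot\| : G \to \mathbb{R}$ a seminorm arising from an invariant semimetric, i.e. $\|g\| \ge 0$, $\|g^{-1}\| = \|g\|$, and $\|gh\| \le \|g\| + \|h\|$ for all $g, h \in G$. Define $\tau(g) = \liminf_{n \to \infty} \|g^n\|/n$, and suppose there exists $\varepsilon > 0$ such that $\tau(g) \ge \varepsilon$ for every infinite-order element $g \in G$ (i.e. the seminorm is translation discrete). Then for every fixed infinite-order element $a \in G$, the set $\{k \in \mathbb{Z} : \exists\, b \in G,\ b^k = a\}$ is finite. -/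
/-!
If `b ^ m = a` with `m > 0`, then along the multiples `j = m n` we have
`‖b ^ j‖ / j = ‖a ^ n‖ / (m n) ≤ ‖a‖ / m`, so the translation number of `b` is at most `‖a‖ / m`.
Since `b` again has infinite order, translation discreteness bounds it below by `ε`, whence
`m ≤ ‖a‖ / ε`. A root of negative order `k` is a root of order `-k` of the inverse.
-/

open Filter

section Subadditive

variable {G : Type*} [Group G] {norm : G → ℝ}

theorem norm_pow_succ_le (hsub : ∀ g h : G, norm (g * h) ≤ norm g + norm h) (g : G) (n : ℕ) :
    norm (g ^ (n + 1)) ≤ (n + 1) * norm g := by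
  induction n with
  | zero => simp
  | succ n ih =>
    calc norm (g ^ (n + 1 + 1)) ≤ norm (g ^ (n + 1)) + norm g := pow_succ g (n + 1) ▸ hsub _ _
      _ ≤ ((n + 1 : ℕ) + 1) * norm g := by push_cast; linarith

theorem liminf_norm_pow_div_le_of_pow_eq (hnn : ∀ g, 0 ≤ norm g)
    (hsub : ∀ g h : G, norm (g * h) ≤ norm g + norm h) {a b : G} {m : ℕ} (hm : 0 < m)
    (hba : b ^ m = a) :
    liminf (fun n : ℕ => norm (b ^ n) / n) atTop ≤ norm a / m := by
  refine liminf_le_of_frequently_le (frequently_atTop.2 fun N => ⟨m * (N + 1), ?_, ?_⟩)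
    (isBoundedUnder_of ⟨0, fun n => div_nonneg (hnn _) n.cast_nonneg⟩)
  · nlinarith
  · have hpos : (0 : ℝ) < m := by exact_mod_cast hm
    rw [pow_mul, hba, div_le_div_iff₀ (by positivity) hpos]
    push_cast
    nlinarith [norm_pow_succ_le hsub a N]

end Subadditive

theorem not_isOfFinOrder_of_pow_eq {M : Type*} [Monoid M] {a b : M} {m : ℕ}
    (ha : ¬IsOfFinOrder a) (hba : b ^ m = a) : ¬IsOfFinOrder b :=
  fun hb => ha (hba ▸ hb.pow)

theorem exists_pow_natAbs_eq_of_zpow_eq {G : Type*} [Group G] {a b : G} {k : ℤ} (h : b ^ k = a) :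
    ∃ c : G, c ^ k.natAbs = a := by
  rcases Int.natAbs_eq k with hk | hk
  · exact ⟨b, by rw [← zpow_natCast, ← hk, h]⟩
  · exact ⟨b⁻¹, by rw [inv_pow, ← zpow_natCast, ← zpow_neg, ← hk, h]⟩

theorem natAbs_le_of_zpow_eq {G : Type*} [Group G] {norm : G → ℝ} (hnn : ∀ g, 0 ≤ norm g)
    (hsub : ∀ g h : G, norm (g * h) ≤ norm g + norm h) {ε : ℝ} (hε : 0 < ε)
    (hdisc : ∀ g : G, ¬IsOfFinOrder g → ε ≤ liminf (fun n : ℕ => norm (g ^ n) / n) atTop)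
    {a b : G} (ha : ¬IsOfFinOrder a) {k : ℤ} (hb : b ^ k = a) :
    (k.natAbs : ℝ) ≤ norm a / ε := by
  obtain ⟨c, hc⟩ := exists_pow_natAbs_eq_of_zpow_eq hb
  have hk : 0 < k.natAbs := Nat.pos_of_ne_zero fun h0 => ha (by simp [← hc, h0])
  have hτ := (hdisc c (not_isOfFinOrder_of_pow_eq ha hc)).trans
    (liminf_norm_pow_div_le_of_pow_eq hnn hsub hk hc)
  rw [le_div_iff₀ (by exact_mod_cast hk)] at hτ
  rw [le_div_iff₀ hε]
  linarith

theorem roots_of_infinite_order_element_finite_general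
    (G : Type*) [Group G] (norm : G → ℝ)
    (hnn : ∀ g, 0 ≤ norm g)
    (hsub : ∀ g h : G, norm (g * h) ≤ norm g + norm h)
    (ε : ℝ) (hε : 0 < ε)
    (hdisc : ∀ g : G, (∀ n : ℕ, 0 < n → g ^ n ≠ 1) →
      ε ≤ Filter.liminf (fun n : ℕ => norm (g ^ n) / n) Filter.atTop)
    (a : G) (ha : ∀ n : ℕ, 0 < n → a ^ n ≠ 1) :
    {k : ℤ | ∃ b : G, b ^ k = a}.Finite := by
  have hdisc' : ∀ g : G, ¬IsOfFinOrder g → ε ≤ liminf (fun n : ℕ => norm (g ^ n) / n) atTop :=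
    fun g hg => hdisc g (by simpa [isOfFinOrder_iff_pow_eq_one] using hg)
  have ha' : ¬IsOfFinOrder a := by simpa [isOfFinOrder_iff_pow_eq_one] using ha
  refine (Set.finite_Icc (-(⌊norm a / ε⌋₊ : ℤ)) ⌊norm a / ε⌋₊).subset fun k ⟨b, hb⟩ => ?_
  have := Nat.le_floor (natAbs_le_of_zpow_eq hnn hsub hε hdisc' ha' hb)
  simp only [Set.mem_Icc]
  omega

/-- For a translation discrete seminorm on `G` and a fixed infinite-order element `a`,
the set of integers `k` such that `a` admits a `k`-th root in `G` is finite. -/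
theorem roots_of_infinite_order_element_finite
    (G : Type*) [Group G] (norm : G → ℝ)
    (hnn : ∀ g, 0 ≤ norm g)
    (hinv : ∀ g : G, norm g⁻¹ = norm g)
    (hsub : ∀ g h : G, norm (g * h) ≤ norm g + norm h)
    (ε : ℝ) (hε : 0 < ε)
    (hdisc : ∀ g : G, (∀ n : ℕ, 0 < n → g ^ n ≠ 1) →
      ε ≤ Filter.liminf (fun n : ℕ => norm (g ^ n) / n) Filter.atTop)
    (a : G) (ha : ∀ n : ℕ, 0 < n → a ^ n ≠ 1) :
    {k : ℤ | ∃ b : G, b ^ k = a}.Finite :=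
  roots_of_infinite_order_element_finite_general G norm hnn hsub ε hε hdisc a ha
end

section
/- Let $G$ be a group equipped with a seminorm $\|\cdot\| : G \to \mathbb{R}$ (i.e. $\|g\| \ge 0$, $\|g^{-1}\| = \|g\|$, $\|gh\| \le \|g\| + \|h\|$) which is translation discrete with constant $\varepsilon > 0$, and suppose every finite subgroup of $G$ has order at most $M$. Let $a \in G$ have infinite order. Then every virtually infinite cyclic subgroup $A \le G$ containing $a$ satisfies $[A : \langle a \rangle] \le 2 M \tau(a)/\varepsilon$, where $\tau(a) = \liminf_{n\to\infty} \|a^n\|/n$; in particular this index is finite and uniformly bounded over all such $A$. -/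
/-!
A virtually infinite cyclic group `A` has a normal infinite cyclic subgroup `N` of finite index.
Conjugation acts on `N` through `Aut ℤ ≅ {±1}`, so the centralizer `A₀` of `N` has index at most
`2`; it contains every element of infinite order, because such an element fixes its own nontrivial
power lying in `N`. Since `N` is central of finite index in `A₀`, the transfer `A₀ → N ≅ ℤ`,
`g ↦ g ^ [A₀ : N]`, has finite kernel `F`, so `|F| ≤ M`. If `ψ u` generates its image and
`ψ a = (ψ u) ^ p`, then `[A₀ : ⟨a⟩] ≤ |F| |p|`, while `a ^ n` and `u ^ (p n)` differ by an element
of `F`, so that `τ(a) = |p| τ(u) ≥ |p| ε`.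
-/

open Filter Function Subgroup Topology

section

variable {G H : Type*} [Group G] [Group H]

/-- Unlike Mathlib's `GroupSeminorm`, this does not require `ν 1 = 0`. -/
structure IsSeminorm (ν : G → ℝ) : Prop where
  map_inv : ∀ g, ν g⁻¹ = ν g
  map_mul_le : ∀ g h, ν (g * h) ≤ ν g + ν h

noncomputable def translationNumber (ν : G → ℝ) (g : G) : ℝ :=
  liminf (fun n : ℕ => ν (g ^ n) / n) atTop

theorem translationNumber_comp (ν : G → ℝ) (f : H →* G) (g : H) :
    translationNumber (ν ∘ f) g = translationNumber ν (f g) := by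
  simp only [translationNumber, comp_apply, map_pow]

namespace IsSeminorm

variable {ν : G → ℝ}

theorem nonneg (hν : IsSeminorm ν) (g : G) : 0 ≤ ν g := by
  have h₁ : ν 1 ≤ ν g + ν g := by simpa [hν.map_inv] using hν.map_mul_le g g⁻¹
  have h₂ : ν 1 ≤ ν 1 + ν 1 := by simpa using hν.map_mul_le 1 1
  linarith

theorem comp (hν : IsSeminorm ν) (f : H →* G) : IsSeminorm (ν ∘ f) :=
  ⟨fun g => by simp [hν.map_inv], fun g h => by simpa using hν.map_mul_le (f g) (f h)⟩

theorem tendsto_translationNumber (hν : IsSeminorm ν) (g : G) :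
    Tendsto (fun n : ℕ => ν (g ^ n) / n) atTop (𝓝 (translationNumber ν g)) := by
  have hsub : Subadditive fun n => ν (g ^ n) := fun m n => by
    simpa only [pow_add] using hν.map_mul_le (g ^ m) (g ^ n)
  have hbdd : BddBelow (Set.range fun n : ℕ => ν (g ^ n) / n) :=
    ⟨0, by rintro _ ⟨n, rfl⟩; exact div_nonneg (hν.nonneg _) n.cast_nonneg⟩
  have hlim := hsub.tendsto_lim hbdd
  rwa [translationNumber, hlim.liminf_eq]

theorem translationNumber_pow (hν : IsSeminorm ν) (g : G) (m : ℕ) :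
    translationNumber ν (g ^ m) = m * translationNumber ν g := by
  rcases eq_or_ne m 0 with rfl | hm
  · simp only [translationNumber, pow_zero, one_pow, Nat.cast_zero, zero_mul]
    exact (tendsto_const_div_atTop_nhds_zero_nat _).liminf_eq
  have hmn : Tendsto (fun n : ℕ => m * n) atTop atTop :=
    tendsto_id.nsmul_atTop (Nat.pos_of_ne_zero hm)
  have h := ((hν.tendsto_translationNumber g).comp hmn).const_mul (m : ℝ)
  refine tendsto_nhds_unique (hν.tendsto_translationNumber (g ^ m)) (h.congr fun n => ?_)
  have : (m : ℝ) ≠ 0 := Nat.cast_ne_zero.mpr hm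
  simp only [comp_apply, ← pow_mul, Nat.cast_mul]
  field_simp

theorem translationNumber_inv (hν : IsSeminorm ν) (g : G) :
    translationNumber ν g⁻¹ = translationNumber ν g := by
  simp only [translationNumber, inv_pow, hν.map_inv]

theorem translationNumber_zpow (hν : IsSeminorm ν) (g : G) (k : ℤ) :
    translationNumber ν (g ^ k) = k.natAbs * translationNumber ν g := by
  rcases Int.natAbs_eq k with h | h <;> rw [h]
  · rw [zpow_natCast, hν.translationNumber_pow, Int.natAbs_natCast]
  · rw [zpow_neg, zpow_natCast, hν.translationNumber_inv, hν.translationNumber_pow,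
      Int.natAbs_neg, Int.natAbs_natCast]

theorem translationNumber_le_of_le_add (hν : IsSeminorm ν) {g h : G} (c : ℝ)
    (hc : ∀ n : ℕ, ν (g ^ n) ≤ ν (h ^ n) + c) :
    translationNumber ν g ≤ translationNumber ν h := by
  have hlim := (hν.tendsto_translationNumber h).add (tendsto_const_div_atTop_nhds_zero_nat c)
  rw [add_zero] at hlim
  refine le_of_tendsto_of_tendsto' (hν.tendsto_translationNumber g) hlim fun n => ?_
  rw [← add_div]
  exact div_le_div_of_nonneg_right (hc n) n.cast_nonneg

theorem translationNumber_eq_of_map_eq (hν : IsSeminorm ν) (ψ : G →* H) [Finite ψ.ker]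
    {x y : G} (hxy : ψ x = ψ y) : translationNumber ν x = translationNumber ν y := by
  obtain ⟨c, hc⟩ := ((ψ.ker : Set G).toFinite.image ν).bddAbove
  have key : ∀ a b : G, ψ a = ψ b → ∀ n : ℕ, ν (a ^ n) ≤ ν (b ^ n) + c := fun a b hab n => by
    have hk : a ^ n * (b ^ n)⁻¹ ∈ ψ.ker := by simp [hab]
    calc ν (a ^ n) = ν (a ^ n * (b ^ n)⁻¹ * b ^ n) := by rw [inv_mul_cancel_right]
      _ ≤ ν (a ^ n * (b ^ n)⁻¹) + ν (b ^ n) := hν.map_mul_le _ _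
      _ ≤ ν (b ^ n) + c := by linarith [hc ⟨_, hk, rfl⟩]
  exact le_antisymm (hν.translationNumber_le_of_le_add c (key x y hxy))
    (hν.translationNumber_le_of_le_add c (key y x hxy.symm))

end IsSeminorm

theorem zpowers_subgroupOf {K : Subgroup G} {a : G} (ha : a ∈ K) :
    (zpowers a).subgroupOf K = zpowers ⟨a, ha⟩ := by
  rw [subgroupOf, ← comap_map_eq_self_of_injective K.subtype_injective (zpowers ⟨a, ha⟩),
    MonoidHom.map_zpowers]
  rfl

theorem card_subgroup_le_of_injective {M : ℕ}
    (hbound : ∀ K : Subgroup G, (K : Set G).Finite → Nat.card K ≤ M)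
    {f : H →* G} (hf : Injective f) (K : Subgroup H) (hK : (K : Set H).Finite) :
    Nat.card K ≤ M := by
  rw [← card_map_of_injective hf]
  exact hbound _ (by rw [coe_map]; exact hK.image f)

theorem isOfFinOrder_of_isOfFinOrder_map (ψ : G →* H) [Finite ψ.ker] {x : G}
    (h : IsOfFinOrder (ψ x)) : IsOfFinOrder x := by
  obtain ⟨n, hn, hxn⟩ := isOfFinOrder_iff_pow_eq_one.mp h
  have hk : x ^ n ∈ ψ.ker := by rw [MonoidHom.mem_ker, map_pow, hxn]
  have : IsOfFinOrder (⟨x ^ n, hk⟩ : ψ.ker) := isOfFinOrder_of_finite _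
  exact (ψ.ker.subtype_injective.isOfFinOrder_iff.mpr this).of_pow hn.ne'

theorem Subgroup.finite_of_inf_eq_bot {K L : Subgroup G} [L.FiniteIndex] (h : K ⊓ L = ⊥) :
    Finite K := by
  refine Nat.finite_of_card_ne_zero ?_
  rw [← relIndex_bot_left, ← h, inf_comm, inf_relIndex_right, relIndex]
  exact FiniteIndex.index_ne_zero

theorem exists_monoidHom_int_finite_ker {L : Subgroup G} [L.FiniteIndex] (hL : L ≤ center G)
    (ϕ : L →* Multiplicative ℤ) (hϕ : Injective ϕ) :
    ∃ ψ : G →* Multiplicative ℤ, Finite ψ.ker := by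
  refine ⟨ϕ.transfer, finite_of_inf_eq_bot (L := L) (eq_bot_iff.mpr ?_)⟩
  rintro g ⟨hg, hgL⟩
  have hpow := MonoidHom.transfer_eq_pow ϕ g fun k g₀ hk => by
    have := mem_center_iff.mp (hL hk) g₀
    exact mul_right_cancel (by rw [← this]; group)
  have : ϕ ⟨g, hgL⟩ ^ L.index = 1 := by
    rw [← map_pow, ← (MonoidHom.mem_ker.mp hg : ϕ.transfer g = 1), hpow]
    rfl
  rcases pow_eq_one_iff.mp this with h | h
  · exact congrArg Subtype.val (hϕ (h.trans ϕ.map_one.symm))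
  · exact absurd h FiniteIndex.index_ne_zero

theorem MulAut.eq_one_of_apply_eq_self {N : Type*} [Group N] [IsCyclic N] [Infinite N]
    {σ : MulAut N} {y : N} (hy : y ≠ 1) (hσ : σ y = y) : σ = 1 := by
  obtain ⟨g, hg⟩ := isCyclic_iff_exists_zpowers_eq_top.mp ‹IsCyclic N›
  have hpow : ∀ z : N, ∃ k : ℤ, g ^ k = z := fun z => mem_zpowers_iff.mp (hg ▸ mem_top z)
  have hinj : Injective (g ^ · : ℤ → N) := injective_zpow_iff_not_isOfFinOrder.mpr <|
    infinite_zpowers.mp (by rw [hg, coe_top]; exact Set.infinite_univ)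
  obtain ⟨k, hk⟩ := hpow (σ g)
  obtain ⟨r, rfl⟩ := hpow y
  have hr : r ≠ 0 := by rintro rfl; exact hy (zpow_zero g)
  have hk1 : k = 1 := by
    have : g ^ (k * r) = g ^ (1 * r) := by rw [zpow_mul, hk, one_mul, ← map_zpow, hσ]
    exact mul_right_cancel₀ hr (hinj this)
  ext z
  obtain ⟨m, rfl⟩ := hpow z
  rw [map_zpow, ← hk, hk1, zpow_one]
  rfl

theorem IsCyclic.card_mulAut_of_infinite (N : Type*) [Group N] [IsCyclic N] [Infinite N] :
    Nat.card (MulAut N) = 2 := by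
  rw [Nat.card_congr (IsCyclic.mulAutMulEquiv N).toEquiv, Nat.card_eq_zero_of_infinite (α := N)]
  exact (by simp : Nat.card ℤˣ = 2)

theorem index_ker_conjNormal_le_two (N : Subgroup G) [N.Normal] [IsCyclic N] [Infinite N] :
    (MulAut.conjNormal : G →* MulAut N).ker.FiniteIndex ∧
      (MulAut.conjNormal : G →* MulAut N).ker.index ≤ 2 := by
  have hcard := IsCyclic.card_mulAut_of_infinite N
  have : Finite (MulAut N) := Nat.finite_of_card_ne_zero (by rw [hcard]; norm_num)
  refine ⟨inferInstance, ?_⟩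
  rw [index_ker, ← hcard]
  exact card_le_card_group _

theorem mem_ker_conjNormal_of_not_isOfFinOrder {N : Subgroup G} [N.Normal] [N.FiniteIndex]
    [IsCyclic N] [Infinite N] {g : G} (hg : ¬IsOfFinOrder g) :
    g ∈ (MulAut.conjNormal : G →* MulAut N).ker := by
  refine MulAut.eq_one_of_apply_eq_self (y := ⟨g ^ N.index, N.pow_index_mem g⟩) ?_ ?_
  · exact fun h => hg (isOfFinOrder_iff_pow_eq_one.mpr
      ⟨N.index, Nat.pos_of_ne_zero FiniteIndex.index_ne_zero, congrArg Subtype.val h⟩)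
  · ext
    rw [MulAut.conjNormal_apply]
    group

theorem subgroupOf_ker_conjNormal_le_center (N : Subgroup G) [N.Normal] :
    N.subgroupOf (MulAut.conjNormal : G →* MulAut N).ker ≤ center _ := by
  intro h hh
  rw [mem_center_iff]
  intro c
  have := congrArg Subtype.val (DFunLike.congr_fun (MonoidHom.mem_ker.mp c.2) ⟨h, hh⟩)
  rw [MulAut.conjNormal_apply] at this
  exact Subtype.ext (by simpa using mul_inv_eq_iff_eq_mul.mp this)

theorem isCyclic_normalCore {B : Subgroup G} (e : B ≃* Multiplicative ℤ) :
    IsCyclic B.normalCore :=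
  have : IsCyclic B := isCyclic_of_surjective e.symm.toMonoidHom e.symm.surjective
  isCyclic_of_le (normalCore_le B)

theorem infinite_normalCore {B : Subgroup G} [B.FiniteIndex] (e : B ≃* Multiplicative ℤ) :
    Infinite B.normalCore := by
  have : Infinite G := Infinite.of_injective _ (B.subtype_injective.comp e.symm.injective)
  rw [← not_finite_iff_infinite]
  intro hfin
  have : Finite G := (finite_iff_finite_and_finiteIndex B.normalCore).mpr ⟨hfin, inferInstance⟩
  exact not_finite G

theorem exists_index_le_two_finite_ker
    (hvc : ∃ B : Subgroup G, B.FiniteIndex ∧ Nonempty (B ≃* Multiplicative ℤ)) :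
    ∃ G₀ : Subgroup G, G₀.FiniteIndex ∧ G₀.index ≤ 2 ∧ (∀ g, ¬IsOfFinOrder g → g ∈ G₀) ∧
      ∃ ψ : G₀ →* Multiplicative ℤ, Finite ψ.ker := by
  obtain ⟨B, _, ⟨e⟩⟩ := hvc
  set N := B.normalCore
  have := isCyclic_normalCore e
  have := infinite_normalCore e
  set G₀ := (MulAut.conjNormal : G →* MulAut N).ker
  obtain ⟨hG₀, hG₀_two⟩ := index_ker_conjNormal_le_two N
  let ι : N.subgroupOf G₀ →* N :=
    (G₀.subtype.comp (N.subgroupOf G₀).subtype).codRestrict N fun h => h.2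
  have hι : Injective ι := fun a b hab =>
    Subtype.ext (Subtype.ext (congrArg (Subtype.val : N → G) hab))
  exact ⟨G₀, hG₀, hG₀_two, fun g => mem_ker_conjNormal_of_not_isOfFinOrder,
    exists_monoidHom_int_finite_ker (subgroupOf_ker_conjNormal_le_center N)
      ((intCyclicMulEquiv (G := N)).symm.toMonoidHom.comp ι)
      ((intCyclicMulEquiv (G := N)).symm.injective.comp hι)⟩

theorem index_zpowers_le_card_ker_mul (ψ : G →* H) [Finite ψ.ker] {u x : G} {p : ℤ}
    (hu : ψ.range ≤ zpowers (ψ u)) (hx : ψ x = ψ u ^ p) (hp : p ≠ 0) :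
    (zpowers x).FiniteIndex ∧ (zpowers x).index ≤ Nat.card ψ.ker * p.natAbs := by
  -- every left coset of `⟨x⟩` is `u ^ i * k * ⟨x⟩` with `k ∈ ker ψ` and `0 ≤ i < |p|`
  let f : ψ.ker × Fin p.natAbs → G ⧸ zpowers x := fun ki => (u ^ (ki.2 : ℕ) * ki.1 : G)
  have hf : Surjective f := by
    intro q
    obtain ⟨g, rfl⟩ := QuotientGroup.mk_surjective q
    obtain ⟨m, hm⟩ := mem_zpowers_iff.mp (hu ⟨g, rfl⟩)
    have hdiv := Int.emod_add_mul_ediv m p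
    have hk : u ^ (-(m % p)) * g * x ^ (-(m / p)) ∈ ψ.ker := by
      rw [MonoidHom.mem_ker, map_mul, map_mul, map_zpow, map_zpow, ← hm, hx, ← zpow_mul,
        ← zpow_add, ← zpow_add, show -(m % p) + m + p * -(m / p) = 0 by linear_combination -hdiv,
        zpow_zero]
    have hr : (m % p).toNat < p.natAbs := by
      have := Int.emod_lt m hp
      have := Int.emod_nonneg m hp
      omega
    refine ⟨(⟨_, hk⟩, ⟨_, hr⟩), QuotientGroup.eq.mpr (mem_zpowers_iff.mpr ⟨m / p, ?_⟩)⟩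
    simp only [Int.toNat_of_nonneg (Int.emod_nonneg m hp), ← zpow_natCast]
    group
  have : Finite (G ⧸ zpowers x) := Finite.of_surjective f hf
  refine ⟨finiteIndex_of_finite_quotient, ?_⟩
  rw [index_eq_card]
  calc Nat.card (G ⧸ zpowers x) ≤ Nat.card (ψ.ker × Fin p.natAbs) :=
        Nat.card_le_card_of_surjective f hf
    _ = Nat.card ψ.ker * p.natAbs := by rw [Nat.card_prod, Nat.card_fin]

theorem index_zpowers_mul_le_translationNumber {ν : G → ℝ} (hν : IsSeminorm ν) {ε : ℝ}
    (hε : 0 ≤ ε) (hdisc : ∀ g : G, ¬IsOfFinOrder g → ε ≤ translationNumber ν g) {M : ℕ}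
    (hbound : ∀ K : Subgroup G, (K : Set G).Finite → Nat.card K ≤ M)
    (hvc : ∃ B : Subgroup G, B.FiniteIndex ∧ Nonempty (B ≃* Multiplicative ℤ))
    {x : G} (hx : ¬IsOfFinOrder x) :
    (zpowers x).FiniteIndex ∧ (zpowers x).index * ε ≤ 2 * M * translationNumber ν x := by
  obtain ⟨G₀, hG₀, hG₀_two, hmem, ψ, _⟩ := exists_index_le_two_finite_ker hvc
  set x₀ : G₀ := ⟨x, hmem x hx⟩
  have hx₀ : ¬IsOfFinOrder x₀ := fun h => hx (G₀.subtype_injective.isOfFinOrder_iff.mpr h)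
  obtain ⟨w, hw⟩ := (Subgroup.isCyclic_iff_exists_zpowers_eq_top ψ.range).mp inferInstance
  obtain ⟨u, rfl⟩ : w ∈ ψ.range := hw ▸ mem_zpowers w
  obtain ⟨p, hp⟩ : ∃ p : ℤ, ψ u ^ p = ψ x₀ :=
    mem_zpowers_iff.mp (by rw [hw]; exact ⟨x₀, rfl⟩)
  have hp₀ : p ≠ 0 := by
    rintro rfl
    exact hx₀ (isOfFinOrder_of_isOfFinOrder_map ψ (by rw [← hp, zpow_zero]; exact .one))
  have hu : ¬IsOfFinOrder (u : G) := fun h => hx₀ (isOfFinOrder_of_isOfFinOrder_map ψ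
    (hp ▸ (ψ.isOfFinOrder (G₀.subtype_injective.isOfFinOrder_iff.mp h)).zpow))
  obtain ⟨hfin, hidx⟩ := index_zpowers_le_card_ker_mul ψ hw.ge hp.symm hp₀
  have hτ : translationNumber ν x = p.natAbs * translationNumber ν u := by
    have hν₀ := hν.comp G₀.subtype
    calc translationNumber ν x = translationNumber (ν ∘ G₀.subtype) x₀ :=
          (translationNumber_comp ν G₀.subtype x₀).symm
      _ = translationNumber (ν ∘ G₀.subtype) (u ^ p) :=
          hν₀.translationNumber_eq_of_map_eq ψ (by rw [map_zpow, hp])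
      _ = p.natAbs * translationNumber ν u := by
          rw [hν₀.translationNumber_zpow, translationNumber_comp]
          rfl
  have hker : Nat.card ψ.ker ≤ M :=
    card_subgroup_le_of_injective hbound G₀.subtype_injective _ (Set.toFinite _)
  have hindex : (zpowers x).index = (zpowers x₀).index * G₀.index := by
    rw [← index_map_subtype, MonoidHom.map_zpowers]
    rfl
  refine ⟨⟨hindex ▸ mul_ne_zero hfin.index_ne_zero hG₀.index_ne_zero⟩, ?_⟩
  calc (zpowers x).index * ε ≤ ((M * p.natAbs * 2 : ℕ) : ℝ) * ε := by
        gcongr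
        rw [hindex]
        exact Nat.mul_le_mul (hidx.trans (Nat.mul_le_mul_right _ hker)) hG₀_two
    _ = 2 * M * (p.natAbs * ε) := by push_cast; ring
    _ ≤ 2 * M * (p.natAbs * translationNumber ν u) := by gcongr; exact hdisc _ hu
    _ = 2 * M * translationNumber ν x := by rw [hτ]

end

theorem index_of_cyclic_in_virtually_cyclic_bounded_general
    (G : Type*) [Group G] (norm : G → ℝ)
    (hinv : ∀ g : G, norm g⁻¹ = norm g)
    (hsub : ∀ g h : G, norm (g * h) ≤ norm g + norm h)
    (ε : ℝ) (hε : 0 < ε)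
    (hdisc : ∀ g : G, (∀ n : ℕ, 0 < n → g ^ n ≠ 1) →
      ε ≤ Filter.liminf (fun n : ℕ => norm (g ^ n) / n) Filter.atTop)
    (M : ℕ) (hbound : ∀ K : Subgroup G, (K : Set G).Finite → Nat.card K ≤ M)
    (a : G) (ha : ∀ n : ℕ, 0 < n → a ^ n ≠ 1)
    (A : Subgroup G) (haA : a ∈ A)
    (hvc : ∃ B : Subgroup A, B.FiniteIndex ∧ Nonempty (B ≃* Multiplicative ℤ)) :
    ((Subgroup.zpowers a).subgroupOf A).FiniteIndex ∧
    ((((Subgroup.zpowers a).subgroupOf A).index : ℝ) ≤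
      2 * M * (Filter.liminf (fun n : ℕ => norm (a ^ n) / n) Filter.atTop) / ε) := by
  have hdisc_A (g : A) (hg : ¬IsOfFinOrder g) : ε ≤ translationNumber (norm ∘ A.subtype) g := by
    rw [translationNumber_comp]
    exact hdisc g fun n hn h => hg (isOfFinOrder_iff_pow_eq_one.mpr ⟨n, hn, Subtype.ext h⟩)
  have ha_A : ¬IsOfFinOrder (⟨a, haA⟩ : A) := fun h => by
    obtain ⟨n, hn, h⟩ := isOfFinOrder_iff_pow_eq_one.mp h
    exact ha n hn (congrArg Subtype.val h)
  obtain ⟨hfin, hidx⟩ := index_zpowers_mul_le_translationNumber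
    ((⟨hinv, hsub⟩ : IsSeminorm norm).comp A.subtype) hε.le hdisc_A
    (card_subgroup_le_of_injective hbound A.subtype_injective) hvc ha_A
  rw [zpowers_subgroupOf haA, le_div_iff₀ hε]
  exact ⟨hfin, hidx⟩

/-- In a group with a translation discrete seminorm (constant `ε`) and bound `M` on
orders of finite subgroups, for a fixed infinite-order element `a`, every virtually
infinite cyclic subgroup `A` containing `a` satisfies `[A : ⟨a⟩] ≤ 2 M τ(a) / ε`. -/
theorem index_of_cyclic_in_virtually_cyclic_bounded
    (G : Type*) [Group G] (norm : G → ℝ)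
    (hnn : ∀ g, 0 ≤ norm g)
    (hinv : ∀ g : G, norm g⁻¹ = norm g)
    (hsub : ∀ g h : G, norm (g * h) ≤ norm g + norm h)
    (ε : ℝ) (hε : 0 < ε)
    (hdisc : ∀ g : G, (∀ n : ℕ, 0 < n → g ^ n ≠ 1) →
      ε ≤ Filter.liminf (fun n : ℕ => norm (g ^ n) / n) Filter.atTop)
    (M : ℕ) (hbound : ∀ K : Subgroup G, (K : Set G).Finite → Nat.card K ≤ M)
    (a : G) (ha : ∀ n : ℕ, 0 < n → a ^ n ≠ 1)
    (A : Subgroup G) (haA : a ∈ A)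
    (hvc : ∃ B : Subgroup A, B.FiniteIndex ∧ Nonempty (B ≃* Multiplicative ℤ)) :
    ((Subgroup.zpowers a).subgroupOf A).FiniteIndex ∧
    ((((Subgroup.zpowers a).subgroupOf A).index : ℝ) ≤
      2 * M * (Filter.liminf (fun n : ℕ => norm (a ^ n) / n) Filter.atTop) / ε) :=
  index_of_cyclic_in_virtually_cyclic_bounded_general G norm hinv hsub ε hε hdisc M hbound a ha A
    haA hvc
end
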